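/- Let w be a dynamic graph over IS_n with w ∈ Solo(P)^ω that is not Fair for P. Then there exist a nonempty Q ⊊ P and a suffix of w lying in Solo(Q)^ω. -/

import Mathlib

/-- `Solo P G` : in the instant graph `G`, processes of `P` receive no messages
from outside `P`. -/
def Solo {n : ℕ} (P : Set (Fin (n + 1))) (G : Fin (n + 1) → Fin (n + 1) → Prop) : Prop :=
  ∀ p q, G p q → q ∈ P → p ∈ P

/-- A graph of `IS_n`: self-loops, Immediacy and Containment. -/
def IsIS {n : ℕ} (G : Fin (n + 1) → Fin (n + 1) → Prop) : Prop :=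
  (∀ a, G a a) ∧ (∀ a b c, G a b → G b c → G a c) ∧ (∀ a b, a ≠ b → G a b ∨ G b a)

/-- There is a journey from `p` to `q` in the dynamic graph `w` starting at round `r`. -/
def Journey {n : ℕ} (w : ℕ → Fin (n + 1) → Fin (n + 1) → Prop) (r : ℕ)
    (p q : Fin (n + 1)) : Prop :=
  ∃ (t : ℕ) (f : Fin (t + 1) → Fin (n + 1)) (g : Fin t → ℕ),
    f 0 = p ∧ f (Fin.last t) = q ∧ StrictMono g ∧ (∀ i, r ≤ g i) ∧
    ∀ i : Fin t, w (g i) (f i.castSucc) (f i.succ)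

/-- `w` is Fair for `P`. -/
def Fair {n : ℕ} (P : Set (Fin (n + 1))) (w : ℕ → Fin (n + 1) → Fin (n + 1) → Prop) : Prop :=
  (∀ r, Solo P (w r)) ∧ ∀ p ∈ P, ∀ q ∈ P, ∀ r, Journey w r p q

/-!
The processes having a journey to `q` that starts at round `r` form a set shrinking as `r`
grows, hence eventually constant, say equal to `Q` from round `s` on. Any edge `a → b` of round
`r ≥ s` with `b ∈ Q` extends a journey from `b` starting at round `r + 1`, so `a ∈ Q`: the
suffix from round `s` lies in `Solo Q`. If `p ∈ P` does not reach `q ∈ P` from some round, then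
`p ∉ Q ∋ q`, so `Q ∩ P` is a nonempty proper subset of `P`, and the suffix lies in `Solo (Q ∩ P)`.
-/

variable {n : ℕ} {w : ℕ → Fin (n + 1) → Fin (n + 1) → Prop}

namespace Journey

theorem refl (w : ℕ → Fin (n + 1) → Fin (n + 1) → Prop) (r : ℕ) (q : Fin (n + 1)) :
    Journey w r q q :=
  ⟨0, fun _ => q, Fin.elim0, rfl, rfl, fun i => i.elim0, fun i => i.elim0, fun i => i.elim0⟩

theorem mono_round {r r' : ℕ} {p q : Fin (n + 1)} (h : r ≤ r') (hJ : Journey w r' p q) :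
    Journey w r p q := by
  obtain ⟨t, f, g, hf0, hflast, hg, hgr, hedge⟩ := hJ
  exact ⟨t, f, g, hf0, hflast, hg, fun i => h.trans (hgr i), hedge⟩

theorem cons {r : ℕ} {a b q : Fin (n + 1)} (hab : w r a b) (hJ : Journey w (r + 1) b q) :
    Journey w r a q := by
  obtain ⟨t, f, g, rfl, hflast, hg, hgr, hedge⟩ := hJ
  have hr : ∀ i, r < g i := fun i => Nat.lt_of_succ_le (hgr i)
  refine ⟨t + 1, Fin.cons a f, Fin.cons r g, rfl, hflast, Fin.strictMono_cons.2 ⟨hr, hg⟩,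
    Fin.cases le_rfl fun i => (hr i).le, Fin.cases hab fun i => hedge i⟩

end Journey

def influencers (w : ℕ → Fin (n + 1) → Fin (n + 1) → Prop) (r : ℕ) (q : Fin (n + 1)) :
    Set (Fin (n + 1)) :=
  {p | Journey w r p q}

theorem antitone_influencers (q : Fin (n + 1)) : Antitone fun r => influencers w r q :=
  fun _ _ h _ hp => Journey.mono_round h hp

theorem exists_influencers_stable (w : ℕ → Fin (n + 1) → Fin (n + 1) → Prop)
    (q : Fin (n + 1)) (s : ℕ) :
    ∃ s' ≥ s, ∀ r ≥ s', influencers w r q = influencers w s' q := by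
  obtain ⟨N, hN⟩ := WellFoundedLT.antitone_chain_condition (antitone_influencers (w := w) q)
  refine ⟨max s N, le_max_left _ _, fun r hr => ?_⟩
  rw [← hN r (le_of_max_le_right hr), ← hN _ (le_max_right _ _)]

theorem solo_influencers_of_stable {s : ℕ} {q : Fin (n + 1)}
    (hstable : ∀ r ≥ s, influencers w r q = influencers w s q) :
    ∀ r ≥ s, Solo (influencers w s q) (w r) := by
  intro r hr a b hab hb
  rw [← hstable (r + 1) (by omega)] at hb
  rw [← hstable r hr]
  exact Journey.cons hab hb

theorem Solo.inter {P Q : Set (Fin (n + 1))} {G : Fin (n + 1) → Fin (n + 1) → Prop}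
    (hP : Solo P G) (hQ : Solo Q G) : Solo (P ∩ Q) G :=
  fun a b hab hb => ⟨hP a b hab hb.1, hQ a b hab hb.2⟩

theorem not_fair_solo_suffix_general {n : ℕ} (w : ℕ → Fin (n + 1) → Fin (n + 1) → Prop)
    (P : Set (Fin (n + 1)))
    (hw : ∀ r, Solo P (w r)) (hnfair : ¬ Fair P w) :
    ∃ Q : Set (Fin (n + 1)), Q.Nonempty ∧ Q ⊂ P ∧ ∃ s, ∀ r ≥ s, Solo Q (w r) := by
  obtain ⟨p, hp, q, hq, s, hpq⟩ : ∃ p ∈ P, ∃ q ∈ P, ∃ s, ¬ Journey w s p q := by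
    by_contra! h
    exact hnfair ⟨hw, h⟩
  obtain ⟨s', hss', hstable⟩ := exists_influencers_stable w q s
  refine ⟨influencers w s' q ∩ P, ⟨q, Journey.refl w s' q, hq⟩,
    ⟨Set.inter_subset_right, fun hPQ => hpq (Journey.mono_round hss' (hPQ hp).1)⟩, s',
    fun r hr => (solo_influencers_of_stable hstable r hr).inter (hw r)⟩

theorem not_fair_solo_suffix {n : ℕ} (w : ℕ → Fin (n + 1) → Fin (n + 1) → Prop)
    (hIS : ∀ r, IsIS (w r)) (P : Set (Fin (n + 1)))
    (hw : ∀ r, Solo P (w r)) (hnfair : ¬ Fair P w) :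
    ∃ Q : Set (Fin (n + 1)), Q.Nonempty ∧ Q ⊂ P ∧ ∃ s, ∀ r ≥ s, Solo Q (w r) :=
  not_fair_solo_suffix_general w P hw hnfair
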